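/- Let φ, κ be smooth scalar fields, Γ_i a smooth vector field, and γ̃_ij, A_ij smooth symmetric matrix fields on ℝ × ℝ³ satisfying the full reduced linearized BSSN system (R1)–(R5). Define Q_lij := −(1/2)∂_l γ̃_ij + (1/2)[ δ_li(Γ_j − 8∂_j φ) + δ_lj(Γ_i − 8∂_i φ) ] and the energy density E := (1/2)[ κ² + 36 Σ_l (∂_l φ)² + Σ_l (Γ_l − 8∂_l φ)² + Σ_{ij} A_ij² + Σ_{lij} Q_lij² ]. Then at every point of ℝ × ℝ³, ∂_t E = Σ_l ∂_l ( −6 κ ∂_l φ + Σ_{ij} Q_lij A_ij ); in particular the time derivative of the total energy density is a spatial divergence, so the energy growth is determined solely by boundary terms. -/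

import Mathlib

noncomputable section

/-- Spacetime ℝ × ℝ³. -/
abbrev Spc : Type := ℝ × (Fin 3 → ℝ)

/-- Time derivative ∂_t. -/
noncomputable def pt (f : Spc → ℝ) : Spc → ℝ :=
  fun p => deriv (fun s => f (s, p.2)) p.1

/-- Spatial partial derivative ∂_i. -/
noncomputable def ps (i : Fin 3) (f : Spc → ℝ) : Spc → ℝ :=
  fun p => deriv (fun s => f (p.1, Function.update p.2 i s)) (p.2 i)

/-- Spatial Laplacian Δ = Σ_i ∂_i ∂_i. -/
noncomputable def lap (f : Spc → ℝ) : Spc → ℝ :=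
  fun p => ∑ i : Fin 3, ps i (ps i f) p

/-- Kronecker delta δ_ij. -/
noncomputable def kron (i j : Fin 3) : ℝ := if i = j then 1 else 0

section Aux
variable {f g : Spc → ℝ}

lemma innerT (x : Fin 3 → ℝ) (t : ℝ) :
    HasDerivAt (fun s : ℝ => ((s, x) : Spc)) (1, (0 : Fin 3 → ℝ)) t :=
  (hasDerivAt_id t).prodMk (hasDerivAt_const t x)

lemma innerS (t₀ : ℝ) (x : Fin 3 → ℝ) (i : Fin 3) (s₀ : ℝ) :
    HasDerivAt (fun s : ℝ => ((t₀, Function.update x i s) : Spc))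
      ((0:ℝ), Pi.single i 1) s₀ := by
  refine (hasDerivAt_const s₀ t₀).prodMk ?_
  rw [hasDerivAt_pi]
  intro j
  by_cases h : j = i
  · subst h
    simp only [Function.update_self, Pi.single_eq_same]
    exact hasDerivAt_id s₀
  · simp only [Function.update_of_ne h, Pi.single_eq_of_ne h]
    exact hasDerivAt_const s₀ (x j)

notation "Smooth" => ContDiff ℝ ((⊤ : ℕ∞) : WithTop ℕ∞)

lemma one_le' : (1 : WithTop ℕ∞) ≤ ((⊤ : ℕ∞) : WithTop ℕ∞) := by exact_mod_cast le_top
lemma add_one_le : ((⊤ : ℕ∞) : WithTop ℕ∞) + 1 ≤ ((⊤ : ℕ∞) : WithTop ℕ∞) := by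
  exact_mod_cast le_top

variable {f g : Spc → ℝ}

lemma sliceT_hasDerivAt (hf : Smooth f) (p : Spc) :
    HasDerivAt (fun s => f (s, p.2)) (fderiv ℝ f p (1, (0 : Fin 3 → ℝ))) p.1 := by
  have h := ((hf.differentiable (by simp) (p.1, p.2)).hasFDerivAt).comp_hasDerivAt p.1 (innerT p.2 p.1)
  exact h

lemma sliceS_hasDerivAt (hf : Smooth f) (i : Fin 3) (p : Spc) :
    HasDerivAt (fun s => f (p.1, Function.update p.2 i s))
      (fderiv ℝ f p ((0:ℝ), Pi.single i 1)) (p.2 i) := by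
  have h := ((hf.differentiable (by simp) (p.1, Function.update p.2 i (p.2 i))).hasFDerivAt).comp_hasDerivAt
    (p.2 i) (innerS p.1 p.2 i (p.2 i))
  simp only [Function.update_eq_self] at h
  exact h

lemma pt_eq_fderiv (hf : Smooth f) (p : Spc) :
    pt f p = fderiv ℝ f p (1, (0 : Fin 3 → ℝ)) :=
  (sliceT_hasDerivAt hf p).deriv

lemma ps_eq_fderiv (hf : Smooth f) (i : Fin 3) (p : Spc) :
    ps i f p = fderiv ℝ f p ((0:ℝ), Pi.single i 1) :=
  (sliceS_hasDerivAt hf i p).deriv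

lemma pt_hasDerivAt (hf : Smooth f) (p : Spc) :
    HasDerivAt (fun s => f (s, p.2)) (pt f p) p.1 := by
  rw [pt_eq_fderiv hf]; exact sliceT_hasDerivAt hf p

lemma ps_hasDerivAt (hf : Smooth f) (i : Fin 3) (p : Spc) :
    HasDerivAt (fun s => f (p.1, Function.update p.2 i s)) (ps i f p) (p.2 i) := by
  rw [ps_eq_fderiv hf]; exact sliceS_hasDerivAt hf i p

lemma fderiv_apply_smooth (hf : Smooth f) (v : Spc) :
    Smooth (fun q => fderiv ℝ f q v) :=
  (hf.fderiv_right add_one_le).clm_apply contDiff_const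

lemma pt_smooth (hf : Smooth f) : Smooth (pt f) := by
  have : pt f = fun q => fderiv ℝ f q (1, (0 : Fin 3 → ℝ)) :=
    funext fun q => pt_eq_fderiv hf q
  rw [this]; exact fderiv_apply_smooth hf _
lemma ps_smooth (hf : Smooth f) (i : Fin 3) : Smooth (ps i f) := by
  have : ps i f = fun q => fderiv ℝ f q ((0:ℝ), Pi.single i 1) :=
    funext fun q => ps_eq_fderiv hf i q
  rw [this]; exact fderiv_apply_smooth hf _

-- second derivative
lemma fderiv_fderiv_apply (hf : Smooth f) (v w : Spc) (p : Spc) :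
    fderiv ℝ (fun q => fderiv ℝ f q v) p w = fderiv ℝ (fderiv ℝ f) p w v := by
  have hd : DifferentiableAt ℝ (fderiv ℝ f) p :=
    ((hf.fderiv_right add_one_le).differentiable (by simp)).differentiableAt
  have h := ((ContinuousLinearMap.apply ℝ ℝ v).hasFDerivAt).comp p hd.hasFDerivAt
  have h2 : fderiv ℝ (fun q => fderiv ℝ f q v) p
      = ((ContinuousLinearMap.apply ℝ ℝ v).comp (fderiv ℝ (fderiv ℝ f) p)) := h.fderiv
  rw [h2]; rfl

lemma symm2 (hf : Smooth f) (p : Spc) (v w : Spc) :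
    fderiv ℝ (fderiv ℝ f) p v w = fderiv ℝ (fderiv ℝ f) p w v := by
  have : IsSymmSndFDerivAt ℝ f p := hf.contDiffAt.isSymmSndFDerivAt (by simp; exact WithTop.coe_le_coe.2 le_top)
  exact this v w

lemma pt_ps_comm (hf : Smooth f) (l : Fin 3) (p : Spc) :
    pt (ps l f) p = ps l (pt f) p := by
  have hps : ps l f = fun q => fderiv ℝ f q ((0:ℝ), Pi.single l 1) :=
    funext fun q => ps_eq_fderiv hf l q
  have hpt : pt f = fun q => fderiv ℝ f q (1, (0 : Fin 3 → ℝ)) :=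
    funext fun q => pt_eq_fderiv hf q
  rw [hps, hpt, pt_eq_fderiv (fderiv_apply_smooth hf _) p,
    ps_eq_fderiv (fderiv_apply_smooth hf _) l p,
    fderiv_fderiv_apply hf, fderiv_fderiv_apply hf, symm2 hf]

lemma ps_ps_comm (hf : Smooth f) (i j : Fin 3) (p : Spc) :
    ps i (ps j f) p = ps j (ps i f) p := by
  have hi : ps i f = fun q => fderiv ℝ f q ((0:ℝ), Pi.single i 1) :=
    funext fun q => ps_eq_fderiv hf i q
  have hj : ps j f = fun q => fderiv ℝ f q ((0:ℝ), Pi.single j 1) :=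
    funext fun q => ps_eq_fderiv hf j q
  rw [hi, hj, ps_eq_fderiv (fderiv_apply_smooth hf _) i p,
    ps_eq_fderiv (fderiv_apply_smooth hf _) j p,
    fderiv_fderiv_apply hf, fderiv_fderiv_apply hf, symm2 hf]

-- pointwise calculus helpers
lemma pt_const_mul (hf : Smooth f) (c : ℝ) (p : Spc) :
    pt (fun q => c * f q) p = c * pt f p :=
  ((pt_hasDerivAt hf p).const_mul c).deriv

lemma ps_const_mul (hf : Smooth f) (c : ℝ) (i : Fin 3) (p : Spc) :
    ps i (fun q => c * f q) p = c * ps i f p :=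
  ((ps_hasDerivAt hf i p).const_mul c).deriv

end Aux

/-- For the full reduced linearized BSSN system (R1)–(R5), the total energy density
`E = (1/2)[κ² + 36 Σ(∂_l φ)² + Σ(Γ_l − 8∂_l φ)² + Σ A_ij² + Σ Q_lij²]` has time
derivative equal to the spatial divergence `Σ_l ∂_l(−6κ∂_l φ + Σ_ij Q_lij A_ij)`. -/
theorem reduced_total_energy_identity
    (φ κ : Spc → ℝ) (Γ : Fin 3 → Spc → ℝ)
    (γ A : Fin 3 → Fin 3 → Spc → ℝ)
    (hφ : ContDiff ℝ (⊤ : ℕ∞) φ) (hκ : ContDiff ℝ (⊤ : ℕ∞) κ)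
    (hΓ : ∀ i, ContDiff ℝ (⊤ : ℕ∞) (Γ i))
    (hγ : ∀ i j, ContDiff ℝ (⊤ : ℕ∞) (γ i j)) (hA : ∀ i j, ContDiff ℝ (⊤ : ℕ∞) (A i j))
    (hγsym : ∀ i j, γ i j = γ j i) (hAsym : ∀ i j, A i j = A j i)
    (R1 : ∀ p, pt φ p = -(1/6) * κ p)
    (R2 : ∀ p, pt κ p = -6 * lap φ p)
    (R3 : ∀ i j p, pt (γ i j) p = -2 * A i j p)
    (R4 : ∀ i j p, pt (A i j) p =
      -(1/2) * lap (γ i j) p + (1/2) * (ps i (Γ j) p + ps j (Γ i) p)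
        - 8 * ps i (ps j φ) p)
    (R5 : ∀ i p, pt (Γ i) p = -(4/3) * ps i κ p)
    (Q : Fin 3 → Fin 3 → Fin 3 → Spc → ℝ)
    (hQ : ∀ l i j, Q l i j = fun q =>
      -(1/2) * ps l (γ i j) q
        + (1/2) * (kron l i * (Γ j q - 8 * ps j φ q)
          + kron l j * (Γ i q - 8 * ps i φ q)))
    (E : Spc → ℝ)
    (hE : E = fun q => (1/2) * ((κ q)^2 + 36 * (∑ l, (ps l φ q)^2)
      + (∑ l, (Γ l q - 8 * ps l φ q)^2)
      + (∑ i, ∑ j, (A i j q)^2)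
      + ∑ l, ∑ i, ∑ j, (Q l i j q)^2)) :
    ∀ p, pt E p =
      ∑ l, ps l (fun q => -6 * κ q * ps l φ q + ∑ i, ∑ j, Q l i j q * A i j q) p := by
  -- smoothness of Q
  have hQs : ∀ l i j, ContDiff ℝ (⊤ : ℕ∞) (Q l i j) := by
    intro l i j
    rw [hQ]
    exact (contDiff_const.mul (ps_smooth (hγ i j) l)).add
      (contDiff_const.mul
        ((contDiff_const.mul ((hΓ j).sub (contDiff_const.mul (ps_smooth hφ j)))).add
         (contDiff_const.mul ((hΓ i).sub (contDiff_const.mul (ps_smooth hφ i))))))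
  -- B1
  have B1 : ∀ l p, pt (ps l φ) p = -(1/6) * ps l κ p := by
    intro l p
    rw [pt_ps_comm hφ l p, funext R1]
    exact ps_const_mul hκ _ l p
  -- B3
  have B3 : ∀ i j l p, pt (ps l (γ i j)) p = -2 * ps l (A i j) p := by
    intro i j l p
    rw [pt_ps_comm (hγ i j) l p, funext (R3 i j)]
    exact ps_const_mul (hA i j) _ l p
  -- B4 : pt Q = ps_l A
  have B4 : ∀ l i j p, pt (Q l i j) p = ps l (A i j) p := by
    intro l i j p
    rw [hQ]
    refine Eq.trans (((pt_hasDerivAt (ps_smooth (hγ i j) l) p).const_mul (-(1/2))).add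
      (((((pt_hasDerivAt (hΓ j) p).sub ((pt_hasDerivAt (ps_smooth hφ j) p).const_mul 8)).const_mul (kron l i)).add
       (((pt_hasDerivAt (hΓ i) p).sub ((pt_hasDerivAt (ps_smooth hφ i) p).const_mul 8)).const_mul (kron l j))).const_mul (1/2))).deriv ?_
    rw [B3, B1, B1, R5, R5]
    ring
  -- B5 : spatial derivative of Q
  have B5 : ∀ m l i j p, ps m (Q l i j) p =
      -(1/2) * ps m (ps l (γ i j)) p
        + (1/2) * (kron l i * (ps m (Γ j) p - 8 * ps m (ps j φ) p)
          + kron l j * (ps m (Γ i) p - 8 * ps m (ps i φ) p)) := by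
    intro m l i j p
    rw [hQ]
    exact (((ps_hasDerivAt (ps_smooth (hγ i j) l) m p).const_mul (-(1/2))).add
      (((((ps_hasDerivAt (hΓ j) m p).sub ((ps_hasDerivAt (ps_smooth hφ j) m p).const_mul 8)).const_mul (kron l i)).add
       (((ps_hasDerivAt (hΓ i) m p).sub ((ps_hasDerivAt (ps_smooth hφ i) m p).const_mul 8)).const_mul (kron l j))).const_mul (1/2))).deriv
  -- B6 : divergence of Q gives pt A
  have B6 : ∀ i j p, (∑ l, ps l (Q l i j) p) = pt (A i j) p := by
    intro i j p
    rw [R4]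
    simp only [B5]
    rw [Finset.sum_add_distrib, ← Finset.mul_sum, ← Finset.mul_sum,
      Finset.sum_add_distrib]
    simp only [kron, ite_mul, one_mul, zero_mul, Finset.sum_ite_eq', Finset.mem_univ, if_true]
    rw [ps_ps_comm hφ j i p]
    simp only [lap]
    ring
  -- main computation
  intro p
  have hL : pt E p = (1/2) * ((2 * κ p * pt κ p
      + 36 * ∑ l, 2 * ps l φ p * pt (ps l φ) p
      + ∑ l, 2 * (Γ l p - 8 * ps l φ p) * (pt (Γ l) p - 8 * pt (ps l φ) p)
      + ∑ i, ∑ j, 2 * A i j p * pt (A i j) p)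
      + ∑ l, ∑ i, ∑ j, 2 * Q l i j p * pt (Q l i j) p) := by
    have h1 := (pt_hasDerivAt hκ p).pow 2
    have h2 := (HasDerivAt.sum (u := Finset.univ)
      (fun l _ => (pt_hasDerivAt (ps_smooth hφ l) p).pow 2)).const_mul (36:ℝ)
    have h3 := HasDerivAt.sum (u := Finset.univ)
      (fun l _ => ((pt_hasDerivAt (hΓ l) p).sub
        ((pt_hasDerivAt (ps_smooth hφ l) p).const_mul (8:ℝ))).pow 2)
    have h4 := HasDerivAt.sum (u := Finset.univ)
      (fun i _ => HasDerivAt.sum (u := Finset.univ)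
        (fun j _ => (pt_hasDerivAt (hA i j) p).pow 2))
    have h5 := HasDerivAt.sum (u := Finset.univ)
      (fun l _ => HasDerivAt.sum (u := Finset.univ)
        (fun i _ => HasDerivAt.sum (u := Finset.univ)
          (fun j _ => (pt_hasDerivAt (hQs l i j) p).pow 2)))
    have hd := ((((h1.add h2).add h3).add h4).add h5).const_mul ((1:ℝ)/2)
    rw [hE]
    refine Eq.trans hd.deriv ?_
    norm_num
  have hR : ∀ l, ps l (fun q => -6 * κ q * ps l φ q + ∑ i, ∑ j, Q l i j q * A i j q) p
      = -6 * ps l κ p * ps l φ p + -6 * κ p * ps l (ps l φ) p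
        + ∑ i, ∑ j, (ps l (Q l i j) p * A i j p + Q l i j p * ps l (A i j) p) := by
    intro l
    have hd := ((((ps_hasDerivAt hκ l p).const_mul (-6)).mul (ps_hasDerivAt (ps_smooth hφ l) l p)).add
      (HasDerivAt.sum (u := Finset.univ) fun i _ => HasDerivAt.sum (u := Finset.univ) fun j _ =>
        (ps_hasDerivAt (hQs l i j) l p).mul (ps_hasDerivAt (hA i j) l p))).deriv
    refine Eq.trans hd ?_
    simp only [Function.update_eq_self, Prod.mk.eta]
  rw [hL]
  simp only [hR]
  simp only [R2, R5, B1, B4, ← B6, lap]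
  simp only [Fin.sum_univ_three]
  ring
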